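/- arXiv:2604.13083 — 5 statements merged into one kernel-verified Lean document; each statement's English description precedes it below -/
import Mathlib

section
/- Let p_{-2},...,p_3 ∈ ℝ, and let q_B and q_C be given by q_B = (−7p_{−2} + 105p_{−1} + 210p_0 − 70p_1 + 21p_2 − 3p_3)/256 and q_C = (−3p_{−2} + 21p_{−1} − 70p_0 + 210p_1 + 105p_2 − 7p_3)/256. Define the refined sequence x_0 = p_{−2}, x_2 = p_{−1}, x_3 = q_B, x_4 = p_0, x_5 = q, x_6 = p_1, x_7 = q_C, x_8 = p_2, and discrete curvatures κ_k = 4(x_{k+1} − 2x_k + x_{k−1}) for k = 3,...,7 (with x_1, x_9 any fixed values not entering these κ_k except via none). Then the function E(q) = (κ_4−κ_3)² + (κ_5−κ_4)² + (κ_6−κ_5)² + (κ_7−κ_6)² is a strictly convex quadratic in q whose unique minimiser is q* = (3p_{−2} − 25p_{−1} + 150p_0 + 150p_1 − 25p_2 + 3p_3)/256. -/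
/-- Discrete variational characterisation: the discrete biharmonic energy
`E(q)` is a strictly convex quadratic in `q` with unique minimiser the
6-point Deslauriers–Dubuc value. -/
theorem stmt_3 (pm2 pm1 p0 p1 p2 p3 qB qC : ℝ)
    (hqB : qB = (-7*pm2 + 105*pm1 + 210*p0 - 70*p1 + 21*p2 - 3*p3) / 256)
    (hqC : qC = (-3*pm2 + 21*pm1 - 70*p0 + 210*p1 + 105*p2 - 7*p3) / 256)
    (E : ℝ → ℝ)
    (hE : E = fun q =>
      (4*(q - 2*p0 + qB) - 4*(p0 - 2*qB + pm1))^2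
      + (4*(p1 - 2*q + p0) - 4*(q - 2*p0 + qB))^2
      + (4*(qC - 2*p1 + q) - 4*(p1 - 2*q + p0))^2
      + (4*(p2 - 2*qC + p1) - 4*(qC - 2*p1 + q))^2) :
    StrictConvexOn ℝ Set.univ E ∧
    ∀ q : ℝ,
      q ≠ (3*pm2 - 25*pm1 + 150*p0 + 150*p1 - 25*p2 + 3*p3) / 256 →
      E ((3*pm2 - 25*pm1 + 150*p0 + 150*p1 - 25*p2 + 3*p3) / 256) < E q := by
  constructor
  · refine ⟨convex_univ, ?_⟩
    intro x _ y _ hxy a b ha hb hab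
    subst hE
    simp only [smul_eq_mul]
    have h1 : 0 < a * b * (x - y)^2 := by
      have := sub_ne_zero.mpr hxy
      positivity
    have hb' : b = 1 - a := by linarith
    subst hb'
    have key : a *
        ((4 * (x - 2 * p0 + qB) - 4 * (p0 - 2 * qB + pm1)) ^ 2 + (4 * (p1 - 2 * x + p0) - 4 * (x - 2 * p0 + qB)) ^ 2 +
            (4 * (qC - 2 * p1 + x) - 4 * (p1 - 2 * x + p0)) ^ 2 +
          (4 * (p2 - 2 * qC + p1) - 4 * (qC - 2 * p1 + x)) ^ 2) +
      (1 - a) *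
        ((4 * (y - 2 * p0 + qB) - 4 * (p0 - 2 * qB + pm1)) ^ 2 + (4 * (p1 - 2 * y + p0) - 4 * (y - 2 * p0 + qB)) ^ 2 +
            (4 * (qC - 2 * p1 + y) - 4 * (p1 - 2 * y + p0)) ^ 2 +
          (4 * (p2 - 2 * qC + p1) - 4 * (qC - 2 * p1 + y)) ^ 2)
      - ((4 * (a * x + (1 - a) * y - 2 * p0 + qB) - 4 * (p0 - 2 * qB + pm1)) ^ 2 +
          (4 * (p1 - 2 * (a * x + (1 - a) * y) + p0) - 4 * (a * x + (1 - a) * y - 2 * p0 + qB)) ^ 2 +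
        (4 * (qC - 2 * p1 + (a * x + (1 - a) * y)) - 4 * (p1 - 2 * (a * x + (1 - a) * y) + p0)) ^ 2 +
      (4 * (p2 - 2 * qC + p1) - 4 * (qC - 2 * p1 + (a * x + (1 - a) * y))) ^ 2)
      = 320 * (a * (1 - a) * (x - y) ^ 2) := by ring
    linarith [key, h1]
  · intro q hq
    subst hE hqB hqC
    set m := (3*pm2 - 25*pm1 + 150*p0 + 150*p1 - 25*p2 + 3*p3) / 256 with hm
    have h1 : 0 < (q - m)^2 := by
      have := sub_ne_zero.mpr hq
      positivity
    simp only
    have key : ((4 * (q - 2 * p0 + (-7 * pm2 + 105 * pm1 + 210 * p0 - 70 * p1 + 21 * p2 - 3 * p3) / 256) -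
          4 * (p0 - 2 * ((-7 * pm2 + 105 * pm1 + 210 * p0 - 70 * p1 + 21 * p2 - 3 * p3) / 256) + pm1)) ^ 2 +
        (4 * (p1 - 2 * q + p0) -
          4 * (q - 2 * p0 + (-7 * pm2 + 105 * pm1 + 210 * p0 - 70 * p1 + 21 * p2 - 3 * p3) / 256)) ^ 2 +
        (4 * ((-3 * pm2 + 21 * pm1 - 70 * p0 + 210 * p1 + 105 * p2 - 7 * p3) / 256 - 2 * p1 + q) -
          4 * (p1 - 2 * q + p0)) ^ 2 +
        (4 * (p2 - 2 * ((-3 * pm2 + 21 * pm1 - 70 * p0 + 210 * p1 + 105 * p2 - 7 * p3) / 256) + p1) -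
          4 * ((-3 * pm2 + 21 * pm1 - 70 * p0 + 210 * p1 + 105 * p2 - 7 * p3) / 256 - 2 * p1 + q)) ^ 2)
      - ((4 * (m - 2 * p0 + (-7 * pm2 + 105 * pm1 + 210 * p0 - 70 * p1 + 21 * p2 - 3 * p3) / 256) -
          4 * (p0 - 2 * ((-7 * pm2 + 105 * pm1 + 210 * p0 - 70 * p1 + 21 * p2 - 3 * p3) / 256) + pm1)) ^ 2 +
        (4 * (p1 - 2 * m + p0) -
          4 * (m - 2 * p0 + (-7 * pm2 + 105 * pm1 + 210 * p0 - 70 * p1 + 21 * p2 - 3 * p3) / 256)) ^ 2 +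
        (4 * ((-3 * pm2 + 21 * pm1 - 70 * p0 + 210 * p1 + 105 * p2 - 7 * p3) / 256 - 2 * p1 + m) -
          4 * (p1 - 2 * m + p0)) ^ 2 +
        (4 * (p2 - 2 * ((-3 * pm2 + 21 * pm1 - 70 * p0 + 210 * p1 + 105 * p2 - 7 * p3) / 256) + p1) -
          4 * ((-3 * pm2 + 21 * pm1 - 70 * p0 + 210 * p1 + 105 * p2 - 7 * p3) / 256 - 2 * p1 + m)) ^ 2)
      = 320 * (q - m) ^ 2 := by rw [hm]; ring
    linarith [key, h1]
end

section
/- Let a(z) = 1 + (150/256)(z + z^{−1}) + (−25/256)(z³ + z^{−3}) + (3/256)(z⁵ + z^{−5}). Then the Laurent polynomial z⁵·a(z) is divisible by (1+z)⁶ in ℝ[z], but not divisible by (1+z)⁷. -/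
open Polynomial

noncomputable def qaux : ℝ[X] :=
  C (3/256 : ℝ) * X ^ 4 - C (18/256 : ℝ) * X ^ 3 + C (38/256 : ℝ) * X ^ 2
    - C (18/256 : ℝ) * X + C (3/256 : ℝ)

lemma key_eq :
    (X ^ 5 + C (150/256 : ℝ) * (X ^ 6 + X ^ 4)
        + C (-25/256 : ℝ) * (X ^ 8 + X ^ 2)
        + C (3/256 : ℝ) * (X ^ 10 + 1)) = (1 + X : ℝ[X]) ^ 6 * qaux := by
  apply Polynomial.funext
  intro x
  simp [qaux]
  ring

/-- `z⁵·a(z)` for the 6-point biharmonic symbol is divisible by `(1+z)⁶`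
but not by `(1+z)⁷` in `ℝ[z]`. -/
theorem stmt_6 :
    (1 + X : ℝ[X]) ^ 6 ∣
      (X ^ 5 + C (150/256 : ℝ) * (X ^ 6 + X ^ 4)
        + C (-25/256 : ℝ) * (X ^ 8 + X ^ 2)
        + C (3/256 : ℝ) * (X ^ 10 + 1)) ∧
    ¬ (1 + X : ℝ[X]) ^ 7 ∣
      (X ^ 5 + C (150/256 : ℝ) * (X ^ 6 + X ^ 4)
        + C (-25/256 : ℝ) * (X ^ 8 + X ^ 2)
        + C (3/256 : ℝ) * (X ^ 10 + 1)) := by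
  constructor
  · exact ⟨qaux, key_eq⟩
  · rintro ⟨r, hr⟩
    rw [key_eq, pow_succ (1 + X : ℝ[X]) 6, mul_assoc] at hr
    have h1 : ((1 + X : ℝ[X]) ^ 6) ≠ 0 := pow_ne_zero _ (by
      intro h
      have := congrArg (fun p : ℝ[X] => p.coeff 1) h
      simp [coeff_one] at this)
    have h2 : qaux = (1 + X) * r := mul_left_cancel₀ h1 hr
    have := congrArg (fun p : ℝ[X] => p.eval (-1)) h2
    simp [qaux] at this
    norm_num at this
end

section
/- For the polynomial p(z) = z⁵ + (150/256)(z⁶ + z⁴) + (−25/256)(z⁸ + z²) + (3/256)(z^{10} + 1), one has p(−1) = p'(−1) = p''(−1) = p'''(−1) = p⁗(−1) = p⁽⁵⁾(−1) = 0 and p⁽⁶⁾(−1) ≠ 0. -/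
open Polynomial

lemma iterP_aux (p : ℝ[X]) (k : ℕ) :
    iteratedDeriv k (fun x => p.eval x) = fun x => (derivative^[k] p).eval x := by
  induction k with
  | zero => simp
  | succ n ih =>
    rw [iteratedDeriv_succ, ih]
    funext x
    rw [Function.iterate_succ_apply', Polynomial.deriv]

noncomputable def Pbih : ℝ[X] :=
  X ^ 5 + C (150/256) * (X ^ 6 + X ^ 4) + C (-25/256) * (X ^ 8 + X ^ 2) + C (3/256) * (X ^ 10 + 1)

lemma funeq_bih : (fun z : ℝ => z ^ 5 + (150/256) * (z ^ 6 + z ^ 4)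
      + (-25/256) * (z ^ 8 + z ^ 2) + (3/256) * (z ^ 10 + 1)) = fun x => Pbih.eval x := by
  funext x; simp [Pbih]

/-- All derivatives of order `≤ 5` of `p(z) = z⁵·a(z)` vanish at `z = -1`,
while the sixth derivative does not. -/
theorem stmt_7 :
    (∀ k : ℕ, k ≤ 5 →
      iteratedDeriv k
        (fun z : ℝ => z ^ 5 + (150/256) * (z ^ 6 + z ^ 4)
          + (-25/256) * (z ^ 8 + z ^ 2) + (3/256) * (z ^ 10 + 1)) (-1) = 0) ∧
    iteratedDeriv 6
      (fun z : ℝ => z ^ 5 + (150/256) * (z ^ 6 + z ^ 4)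
        + (-25/256) * (z ^ 8 + z ^ 2) + (3/256) * (z ^ 10 + 1)) (-1) ≠ 0 := by
  rw [funeq_bih]
  constructor
  · intro k hk
    rw [iterP_aux]
    interval_cases k <;>
      simp [Pbih, Function.iterate_succ_apply, derivative_pow] <;> norm_num
  · rw [iterP_aux]
    simp [Pbih, Function.iterate_succ_apply, derivative_pow]
    norm_num
end

section
/- Let a(z) = 1 + (1225/2048)(z + z^{−1}) + (−245/2048)(z³ + z^{−3}) + (49/2048)(z⁵ + z^{−5}) + (−5/2048)(z⁷ + z^{−7}). Then z⁷·a(z) is divisible by (1+z)⁸ in ℝ[z] but not by (1+z)⁹. -/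
open Polynomial

/-- `z⁷·a(z)` for the 8-point degree-7 biharmonic symbol is divisible by
`(1+z)⁸` but not by `(1+z)⁹` in `ℝ[z]`. -/
theorem stmt_10 :
    (1 + X : ℝ[X]) ^ 8 ∣
      (X ^ 7 + C (1225/2048 : ℝ) * (X ^ 8 + X ^ 6)
        + C (-245/2048 : ℝ) * (X ^ 10 + X ^ 4)
        + C (49/2048 : ℝ) * (X ^ 12 + X ^ 2)
        + C (-5/2048 : ℝ) * (X ^ 14 + 1)) ∧
    ¬ (1 + X : ℝ[X]) ^ 9 ∣
      (X ^ 7 + C (1225/2048 : ℝ) * (X ^ 8 + X ^ 6)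
        + C (-245/2048 : ℝ) * (X ^ 10 + X ^ 4)
        + C (49/2048 : ℝ) * (X ^ 12 + X ^ 2)
        + C (-5/2048 : ℝ) * (X ^ 14 + 1)) := by
  set p : ℝ[X] :=
      (X ^ 7 + C (1225/2048 : ℝ) * (X ^ 8 + X ^ 6)
        + C (-245/2048 : ℝ) * (X ^ 10 + X ^ 4)
        + C (49/2048 : ℝ) * (X ^ 12 + X ^ 2)
        + C (-5/2048 : ℝ) * (X ^ 14 + 1)) with hp
  set Qi : ℝ[X] := -5 + 40*X - 131*X^2 + 208*X^3 - 131*X^4 + 40*X^5 - 5*X^6 with hQi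
  have c2048 : (2048 : ℝ[X]) = C (2048 : ℝ) := (map_ofNat C 2048).symm
  have e1 : (2048:ℝ[X]) * C (1225/2048:ℝ) = 1225 := by
    rw [c2048, ← C_mul]; norm_num [map_ofNat]
  have e2 : (2048:ℝ[X]) * C (-245/2048:ℝ) = -245 := by
    rw [c2048, ← C_mul]; norm_num [map_ofNat]
  have e3 : (2048:ℝ[X]) * C (49/2048:ℝ) = 49 := by
    rw [c2048, ← C_mul]; norm_num [map_ofNat]
  have e4 : (2048:ℝ[X]) * C (-5/2048:ℝ) = -5 := by
    rw [c2048, ← C_mul]; norm_num [map_ofNat]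
  have h : (2048 : ℝ[X]) * p = (1+X)^8 * Qi := by
    rw [hp, hQi]
    linear_combination (X^8+X^6) * e1 + (X^10+X^4) * e2 + (X^12+X^2) * e3 + (X^14+1) * e4
  have h2 : p = C (2048⁻¹ : ℝ) * ((2048:ℝ[X]) * p) := by
    rw [c2048, ← mul_assoc, ← C_mul]
    norm_num
  have hone : (1 + X : ℝ[X]) = X - C (-1) := by simp [sub_neg_eq_add, add_comm]
  constructor
  · exact ⟨C (2048⁻¹ : ℝ) * Qi, by rw [h2, h]; ring⟩
  · intro hdvd
    have hd : (1+X:ℝ[X])^8 * (1+X) ∣ (1+X)^8 * Qi := by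
      rw [← h, ← pow_succ]
      exact hdvd.mul_left 2048
    have hne : ((1+X:ℝ[X])^8) ≠ 0 := pow_ne_zero _ (by
      rw [hone]; exact X_sub_C_ne_zero (-1))
    have hdq : (1+X:ℝ[X]) ∣ Qi := (mul_dvd_mul_iff_left hne).mp hd
    rw [hone, dvd_iff_isRoot] at hdq
    have := hdq
    rw [IsRoot, hQi] at this
    simp at this
    norm_num at this
end

section
/- Fix κ_j, κ_{j+1} ∈ ℝ. Define for h > 0 the Euclidean insertion angle α⁰(h) = κ_j (h/2) + (1/2)·((κ_{j+1} − κ_j)/h)·(h/2)² and the spherical insertion angle α¹(h) = κ_j sinh(h/2) + ((κ_{j+1} − κ_j cosh h)/sinh h)·(cosh(h/2) − 1). Then there exist constants C > 0 and h₀ > 0 such that |α¹(h) − α⁰(h)| ≤ C h³ for all 0 < h < h₀. -/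
/-!
The difference of the spherical and the Euclidean angle splits as
`κ₀ (sinh (h/2) - h/2) + (κ₁ - κ₀) (8 (cosh (h/2) - 1) - h sinh h) / (8 sinh h)
  - κ₀ (cosh h - 1) (cosh (h/2) - 1) / sinh h`.
Taylor bounds for `exp` of degree three and four, hence for `sinh` and `cosh`, make the first term
`O(h³)`, the numerator of the second `O(h⁴)` (its `h²` terms cancel) and the numerator of the third
`O(h²·h²)`; since `h ≤ sinh h`, dividing by `sinh h` loses one power of `h`.
-/

open Real Finset

namespace Real

theorem abs_exp_sub_sum_range_le {x : ℝ} (hx : |x| ≤ 1) {n : ℕ} (hn : 2 ≤ n) :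
    |exp x - ∑ m ∈ range n, x ^ m / m.factorial| ≤ |x| ^ n := by
  refine (exp_bound hx (by omega)).trans (mul_le_of_le_one_right (by positivity) ?_)
  rw [div_le_one (by positivity)]
  have : n + 1 ≤ n.factorial * n := by nlinarith [Nat.self_le_factorial n]
  exact_mod_cast this

theorem abs_sinh_sub_self_le {x : ℝ} (hx : |x| ≤ 1) : |sinh x - x| ≤ |x| ^ 3 := by
  have hp := abs_exp_sub_sum_range_le hx (n := 3) (by norm_num)
  have hm := abs_exp_sub_sum_range_le (x := -x) (by rwa [abs_neg]) (n := 3) (by norm_num)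
  norm_num [sum_range_succ, Nat.factorial] at hp hm
  rw [sinh_eq, abs_le] at *
  constructor <;> linarith

theorem abs_sinh_sub_self_sub_cube_le {x : ℝ} (hx : |x| ≤ 1) :
    |sinh x - (x + x ^ 3 / 6)| ≤ |x| ^ 4 := by
  have hp := abs_exp_sub_sum_range_le hx (n := 4) (by norm_num)
  have hm := abs_exp_sub_sum_range_le (x := -x) (by rwa [abs_neg]) (n := 4) (by norm_num)
  norm_num [sum_range_succ, Nat.factorial] at hp hm
  rw [sinh_eq, abs_le] at *
  constructor <;> linarith

theorem abs_cosh_sub_one_sub_sq_le {x : ℝ} (hx : |x| ≤ 1) :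
    |cosh x - (1 + x ^ 2 / 2)| ≤ |x| ^ 4 := by
  have hp := abs_exp_sub_sum_range_le hx (n := 4) (by norm_num)
  have hm := abs_exp_sub_sum_range_le (x := -x) (by rwa [abs_neg]) (n := 4) (by norm_num)
  norm_num [sum_range_succ, Nat.factorial] at hp hm
  rw [cosh_eq, abs_le] at *
  constructor <;> linarith

theorem cosh_sub_one_le {x : ℝ} (hx : |x| ≤ 1) : cosh x - 1 ≤ 3 / 2 * x ^ 2 := by
  have hT := (abs_le.mp (abs_cosh_sub_one_sub_sq_le hx)).2
  have hx4 : |x| ^ 4 ≤ x ^ 2 := by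
    rw [← sq_abs x]
    exact pow_le_pow_of_le_one (abs_nonneg x) hx (by norm_num)
  linarith

theorem abs_eight_mul_cosh_half_sub_one_sub_mul_sinh_le {h : ℝ} (hh : |h| ≤ 1) :
    |8 * (cosh (h / 2) - 1) - h * sinh h| ≤ 2 * h ^ 4 := by
  have hc : |cosh (h / 2) - (1 + h ^ 2 / 8)| ≤ h ^ 4 / 16 := by
    have := abs_cosh_sub_one_sub_sq_le (x := h / 2) (by rw [abs_div]; linarith [abs_nonneg h])
    rw [(show Even 4 by decide).pow_abs] at this
    convert this using 2 <;> ring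
  have hs := abs_sinh_sub_self_sub_cube_le hh
  have hs' : |h * sinh h - h * (h + h ^ 3 / 6)| ≤ h ^ 4 := by
    rw [← mul_sub, abs_mul]
    calc |h| * |sinh h - (h + h ^ 3 / 6)| ≤ 1 * |h| ^ 4 := by gcongr
      _ = h ^ 4 := by rw [one_mul, (show Even 4 by decide).pow_abs]
  have h4 : 0 ≤ h ^ 4 := by positivity
  rw [abs_le] at hc hs' ⊢
  constructor <;> linarith

end Real

noncomputable def euclideanInsertionAngle (κ₀ κ₁ h : ℝ) : ℝ :=
  κ₀ * (h / 2) + (1 / 2) * ((κ₁ - κ₀) / h) * (h / 2) ^ 2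

noncomputable def sphericalInsertionAngle (κ₀ κ₁ h : ℝ) : ℝ :=
  κ₀ * sinh (h / 2) + (κ₁ - κ₀ * cosh h) / sinh h * (cosh (h / 2) - 1)

theorem sphericalInsertionAngle_sub_euclideanInsertionAngle (κ₀ κ₁ : ℝ) {h : ℝ} (hh : h ≠ 0) :
    sphericalInsertionAngle κ₀ κ₁ h - euclideanInsertionAngle κ₀ κ₁ h =
      κ₀ * (sinh (h / 2) - h / 2)
        + (κ₁ - κ₀) * ((8 * (cosh (h / 2) - 1) - h * sinh h) / (8 * sinh h))
        - κ₀ * ((cosh h - 1) * (cosh (h / 2) - 1) / sinh h) := by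
  have hs : sinh h ≠ 0 := sinh_ne_zero.mpr hh
  unfold sphericalInsertionAngle euclideanInsertionAngle
  field_simp
  ring

theorem abs_sphericalInsertionAngle_sub_euclideanInsertionAngle_le (κ₀ κ₁ : ℝ) {h : ℝ}
    (h0 : 0 < h) (h1 : h ≤ 1) :
    |sphericalInsertionAngle κ₀ κ₁ h - euclideanInsertionAngle κ₀ κ₁ h|
      ≤ (|κ₀| + |κ₁ - κ₀|) * h ^ 3 := by
  have hh : |h| ≤ 1 := by rwa [abs_of_pos h0]
  have hh2 : |h / 2| ≤ 1 := by rw [abs_of_pos (by positivity)]; linarith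
  have hsinh : h ≤ sinh h := self_le_sinh_iff.mpr h0.le
  have hsinh_pos : 0 < sinh h := h0.trans_le hsinh
  have hsinh_half : |sinh (h / 2) - h / 2| ≤ h ^ 3 / 8 := by
    have := abs_sinh_sub_self_le hh2
    rwa [abs_of_pos (half_pos h0), div_pow, show (2:ℝ) ^ 3 = 8 by norm_num] at this
  have hquot : |(8 * (cosh (h / 2) - 1) - h * sinh h) / (8 * sinh h)| ≤ h ^ 3 / 4 := by
    rw [abs_div, abs_of_pos (by positivity : 0 < 8 * sinh h), div_le_iff₀ (by positivity)]
    calc _ ≤ 2 * h ^ 4 := abs_eight_mul_cosh_half_sub_one_sub_mul_sinh_le hh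
      _ = h ^ 3 / 4 * (8 * h) := by ring
      _ ≤ h ^ 3 / 4 * (8 * sinh h) := by gcongr
  have hprod : |(cosh h - 1) * (cosh (h / 2) - 1) / sinh h| ≤ 9 / 16 * h ^ 3 := by
    have hc1 := cosh_sub_one_le hh
    have hc2 := cosh_sub_one_le hh2
    have hc1' : 0 ≤ cosh h - 1 := sub_nonneg.mpr (one_le_cosh h)
    have hc2' : 0 ≤ cosh (h / 2) - 1 := sub_nonneg.mpr (one_le_cosh _)
    rw [abs_of_nonneg (by positivity), div_le_iff₀ hsinh_pos]
    calc _ ≤ 3 / 2 * h ^ 2 * (3 / 2 * (h / 2) ^ 2) := by gcongr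
      _ = 9 / 16 * h ^ 3 * h := by ring
      _ ≤ 9 / 16 * h ^ 3 * sinh h := by gcongr
  rw [sphericalInsertionAngle_sub_euclideanInsertionAngle κ₀ κ₁ h0.ne']
  calc _ ≤ |κ₀| * (h ^ 3 / 8) + |κ₁ - κ₀| * (h ^ 3 / 4) + |κ₀| * (9 / 16 * h ^ 3) := by
        refine (abs_sub _ _).trans (add_le_add ((abs_add_le _ _).trans (add_le_add ?_ ?_)) ?_)
          <;> rw [abs_mul] <;> gcongr
    _ ≤ (|κ₀| + |κ₁ - κ₀|) * h ^ 3 := by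
        have := pow_pos h0 3
        nlinarith [abs_nonneg κ₀, abs_nonneg (κ₁ - κ₀)]

/-- Proximity bound: the spherical insertion angle deviates from the Euclidean
one by at most `C h³` for all sufficiently small `h > 0`. -/
theorem stmt_15 (κj κj1 : ℝ) :
    ∃ C > (0:ℝ), ∃ h₀ > (0:ℝ), ∀ h : ℝ, 0 < h → h < h₀ →
      |(κj * Real.sinh (h/2)
          + (κj1 - κj * Real.cosh h) / Real.sinh h * (Real.cosh (h/2) - 1))
        - (κj * (h/2) + (1/2) * ((κj1 - κj) / h) * (h/2)^2)|
      ≤ C * h ^ 3 := by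
  refine ⟨|κj| + |κj1 - κj| + 1, by positivity, 1, one_pos, fun h h0 h1 => ?_⟩
  calc _ ≤ (|κj| + |κj1 - κj|) * h ^ 3 :=
        abs_sphericalInsertionAngle_sub_euclideanInsertionAngle_le κj κj1 h0 h1.le
    _ ≤ (|κj| + |κj1 - κj| + 1) * h ^ 3 :=
        mul_le_mul_of_nonneg_right (le_add_of_nonneg_right zero_le_one) (by positivity)
end
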